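/- arXiv:1805.11255 — 6 statements merged into one kernel-verified Lean document; each statement's English description precedes it below -/
import Mathlib

section
/- With Y, I, Y', Z' as defined (strict running maxima of prefix sums), for any d > 0, the minimum i with sum(Z,i) ≥ d equals the position in I of the 1 whose rank equals the minimum index i' with sum(Z',i') ≥ d. That is, search(Z,d) = select₁(I, search(Z',d)), provided some prefix sum of Z reaches d. -/
/-- Prefix sum `psum Z i = Z[1] + ... + Z[i]` (so `psum Z 0 = 0`). -/
def psum (Z : ℕ → ℤ) (i : ℕ) : ℤ := ∑ j ∈ Finset.Icc 1 i, Z j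

/-- Index `i` is marked (`I[i] = 1`) iff `Y[i]` strictly exceeds all earlier
values `Y[0..i-1]` (with `Y 0 = 0`); `Marked Y 0` holds, matching `I[0] = 1`. -/
def Marked (Y : ℕ → ℤ) (i : ℕ) : Prop := ∀ p < i, Y p < Y i

/-- For `d > 0`, `search(Z,d) = select₁(I, search(Z',d))`: the minimum `i` with
`sum(Z,i) ≥ d` equals the least *marked* position `i` with `Y i ≥ d` (the values of
`Y` at marked positions, in order, are exactly the prefix sums of `Z'`, so the least
marked position with value `≥ d` is `select₁(I, search(Z',d))`).  This assumes some
prefix sum of `Z` reaches `d`. -/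
theorem stmt2 (k : ℕ) (Z Y : ℕ → ℤ) (hY : ∀ i, Y i = psum Z i)
    (d : ℤ) (hd : 0 < d) (hex : ∃ i, 1 ≤ i ∧ i ≤ k ∧ d ≤ Y i) :
    sInf {i | 1 ≤ i ∧ i ≤ k ∧ d ≤ Y i}
      = sInf {i | 1 ≤ i ∧ i ≤ k ∧ Marked Y i ∧ d ≤ Y i} := by
  set S : Set ℕ := {i | 1 ≤ i ∧ i ≤ k ∧ d ≤ Y i} with hS
  have hSne : S.Nonempty := by
    obtain ⟨i, h⟩ := hex; exact ⟨i, h⟩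
  have hmem := Nat.sInf_mem hSne
  obtain ⟨h1, h2, h3⟩ := hmem
  have hY0 : Y 0 = 0 := by simp [hY, psum]
  have hmarked : Marked Y (sInf S) := by
    intro p hp
    rcases Nat.eq_zero_or_pos p with rfl | hp1
    · rw [hY0]; exact lt_of_lt_of_le hd h3
    · have hpnot : p ∉ S := Nat.notMem_of_lt_sInf hp
      have : ¬ d ≤ Y p := fun h => hpnot ⟨hp1, le_trans (le_of_lt hp) h2, h⟩
      exact lt_of_lt_of_le (lt_of_not_ge this) h3
  apply le_antisymm
  · have hne2 : {i | 1 ≤ i ∧ i ≤ k ∧ Marked Y i ∧ d ≤ Y i}.Nonempty :=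
      ⟨sInf S, h1, h2, hmarked, h3⟩
    obtain ⟨a, b, _, c⟩ := Nat.sInf_mem hne2
    exact Nat.sInf_le ⟨a, b, c⟩
  · exact Nat.sInf_le ⟨h1, h2, hmarked, h3⟩
end

section
/- Let Z be an array of k integers, Y its prefix-sum array, and I the strict running-maximum indicator. Suppose Z[i] is increased by 1. Then for every index p with p < i or p > j, where j = min { j ≥ i : I[j] = 1 } (the next marked position at or after i), the value of I[p] is unchanged; moreover I[j] remains 1. -/
theorem marked_congr {Y Y' : ℕ → ℤ} {p : ℕ} (h : ∀ q ≤ p, Y' q = Y q) :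
    Marked Y' p ↔ Marked Y p := by
  simp only [Marked]
  exact forall₂_congr fun q hq => by rw [h q hq.le, h p le_rfl]

theorem Marked.of_sub_le {Y Y' : ℕ → ℤ} {p : ℕ} (hp : Marked Y p)
    (h : ∀ q < p, Y' q - Y q ≤ Y' p - Y p) : Marked Y' p := fun q hq => by
  linarith [hp q hq, h q hq]

theorem Marked.of_forall_Ico {Y : ℕ → ℤ} {j p : ℕ} (hj : Marked Y j) (hjp : j < p)
    (h : ∀ q, j ≤ q → q < p → Y q < Y p) : Marked Y p := fun q hq => by
  rcases lt_or_ge q j with hqj | hjq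
  · exact (hj q hqj).trans (h j le_rfl hjp)
  · exact h q hjq hq

theorem stmt3_general (i j : ℕ) (Y Y' : ℕ → ℤ)
    (hij : i ≤ j)
    (hjm : Marked Y j)
    (hY' : ∀ p, Y' p = if i ≤ p then Y p + 1 else Y p) :
    (∀ p, p < i ∨ j < p → (Marked Y' p ↔ Marked Y p)) ∧ Marked Y' j := by
  have shifted : ∀ q, i ≤ q → Y' q = Y q + 1 := fun q hq => by rw [hY', if_pos hq]
  have unshifted : ∀ q, ¬ i ≤ q → Y' q = Y q := fun q hq => by rw [hY', if_neg hq]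
  have increment_mono : ∀ q p, q ≤ p → Y' q - Y q ≤ Y' p - Y p := fun q p hqp => by
    by_cases hiq : i ≤ q
    · rw [shifted q hiq, shifted p (hiq.trans hqp)]; omega
    · rw [unshifted q hiq, hY' p]
      split_ifs <;> simp
  refine ⟨fun p hp => ?_, hjm.of_sub_le fun q hq => increment_mono q j hq.le⟩
  rcases hp with hpi | hjp
  · exact marked_congr fun q hq => unshifted q (by omega)
  · refine ⟨fun h => hjm.of_forall_Ico hjp fun q hjq hqp => ?_,
      fun h => h.of_sub_le fun q hq => increment_mono q p hq.le⟩
    have := h q hqp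
    rw [shifted q (hij.trans hjq), shifted p (by omega)] at this
    linarith

/-- Increasing `Z[i]` by 1 increases all prefix sums `Y[p]`, `p ≥ i`, by 1
(array `Y'`).  If `j` is the next marked position at or after `i`, then for every
`p < i` or `p > j` the indicator value `I[p]` is unchanged, and `I[j]` remains 1. -/
theorem stmt3 (k i j : ℕ) (Y Y' : ℕ → ℤ) (hY0 : Y 0 = 0)
    (hi : 1 ≤ i) (hij : i ≤ j) (hjk : j ≤ k)
    (hjm : Marked Y j) (hjmin : ∀ q, i ≤ q → q < j → ¬ Marked Y q)
    (hY' : ∀ p, Y' p = if i ≤ p then Y p + 1 else Y p) :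
    (∀ p, p < i ∨ j < p → (Marked Y' p ↔ Marked Y p)) ∧ Marked Y' j :=
  stmt3_general i j Y Y' hij hjm hY'
end

section
/- Under the update Z[i] ← Z[i]+1 with i < j (j the next marked position at or after i), let l be the minimum index ≥ i with D[l] = 0, where D[p] = Y[prev₁(I,p)] − Y[p] and prev₁(I,p) is the largest marked index ≤ p (take l = j if no such index < j exists, noting D[p]=0 at marked p). Then after the update, I[p] is unchanged for all p ∈ [i, l−1], I[l] becomes 1 (if l < j it flips from 0 to 1), and I[p] is unchanged for all p ∈ [l+1, j−1]. -/
/-- `D[p] = 0` iff `Y[p]` equals the running maximum `max(Y[0..p])`, i.e. `Y[p]` is a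
(weak) running maximum: `Y[prev₁(I,p)] - Y[p] = 0`. -/
def TopD (Y : ℕ → ℤ) (p : ℕ) : Prop := ∀ q < p, Y q ≤ Y p

/-- Update `Z[i] ← Z[i]+1` with `i < j`, where `j` is the next marked position at or
after `i`; all prefix sums `Y[p]`, `p ≥ i`, increase by 1 (array `Y'`).  Let `l` be the
minimum index `≥ i` with `D[l] = 0` (i.e. `Y[l]` is a weak running maximum); if no such
index `< j` exists then `l = j` (note `D[j] = 0` since `j` is marked).  Then after the
update: `I[p]` is unchanged for all `p ∈ [i, l-1]`, `I[l]` becomes 1, and `I[p]` is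
unchanged for all `p ∈ [l+1, j-1]`. -/
theorem stmt4 (i j l : ℕ) (Y Y' : ℕ → ℤ) (hY0 : Y 0 = 0)
    (hi : 1 ≤ i) (hij : i < j)
    (hjm : Marked Y j) (hnomark : ∀ q, i ≤ q → q < j → ¬ Marked Y q)
    (hil : i ≤ l) (hlj : l ≤ j)
    (hl : TopD Y l) (hlmin : ∀ p, i ≤ p → p < l → ¬ TopD Y p)
    (hY' : ∀ p, Y' p = if i ≤ p then Y p + 1 else Y p) :
    (∀ p, i ≤ p → p < l → (Marked Y' p ↔ Marked Y p)) ∧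
    Marked Y' l ∧
    (∀ p, l < p → p < j → (Marked Y' p ↔ Marked Y p)) := by
  refine ⟨?_, ?_, ?_⟩
  · intro p hip hpl
    have hF : ¬ Marked Y p := hnomark p hip (lt_of_lt_of_le hpl hlj)
    have hD : ∃ q, q < p ∧ Y p < Y q := by
      have := hlmin p hip hpl
      simp only [TopD, not_forall, not_le] at this
      obtain ⟨q, hq, hq2⟩ := this
      exact ⟨q, hq, hq2⟩
    obtain ⟨q, hq, hYq⟩ := hD
    refine iff_of_false ?_ hF
    intro hM
    have := hM q hq
    rw [hY' q, hY' p] at this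
    by_cases hqi : i ≤ q <;> simp [hqi, hip] at this <;> omega
  · intro q hql
    rw [hY' q, hY' l, if_pos hil]
    by_cases hq : i ≤ q
    · rw [if_pos hq]
      have h1 : Y q ≤ Y l := hl q hql
      by_contra hcon
      have heq : Y q = Y l := by omega
      exact absurd (fun r hr => by rw [heq]; exact hl r (hr.trans hql))
        (hlmin q hq hql)
    · rw [if_neg hq]
      have := hl q hql
      omega
  · intro p hlp hpj
    have hip : i ≤ p := le_trans hil (le_of_lt hlp)
    have hF : ¬ Marked Y p := hnomark p hip hpj
    refine iff_of_false ?_ hF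
    intro hM'
    have hD : ∃ q, q < p ∧ Y p ≤ Y q := by
      simp only [Marked, not_forall, not_lt] at hF
      obtain ⟨q, hq, hq2⟩ := hF
      exact ⟨q, hq, hq2⟩
    obtain ⟨q, hq, hYq⟩ := hD
    by_cases hqi : i ≤ q
    · have := hM' q hq
      rw [hY' q, hY' p, if_pos hqi, if_pos hip] at this
      omega
    · have hql : q < l := lt_of_lt_of_le (lt_of_not_ge hqi) hil
      have h2 : Y q ≤ Y l := hl q hql
      have := hM' l hlp
      rw [hY' l, hY' p, if_pos hil, if_pos hip] at this
      omega
end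

section
/- Under the update Z[i] ← Z[i]−1 with i < j (j the next marked position at or after i, before the update), after the update: I[p] is unchanged for p < i, for p ∈ [i, j−1], and for p > j; and I[j] becomes 0 if and only if, before the update, Y[j] exceeded max(Y[0..i−1]) by exactly 1, i.e. iff the corresponding Z' entry equals 1. -/
lemma stmt5_aux (m j : ℕ) (Y : ℕ → ℤ) (hm : Marked Y m)
    (hnomark : ∀ q, m < q → q < j → ¬ Marked Y q) :
    ∀ q, m < q → q < j → Y q ≤ Y m := by
  intro q
  induction q using Nat.strong_induction_on with
  | _ q ih =>
    intro hmq hqj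
    have h := hnomark q hmq hqj
    simp only [Marked, not_forall, not_lt] at h
    obtain ⟨r, hrq, hr⟩ := h
    rcases lt_trichotomy r m with h1 | h1 | h1
    · exact hr.trans (hm r h1).le
    · exact h1 ▸ hr
    · exact hr.trans (ih r hrq h1 (hrq.trans hqj))

/-- Update `Z[i] ← Z[i]-1` with `i < j`, where `j` is the next marked position at or
after `i` (before the update); all prefix sums `Y[p]`, `p ≥ i`, decrease by 1
(array `Y'`).  Let `m` be the previous marked position (`m < i`, no marked index in
`(m, j)`), so the corresponding entry of `Z'` is `Y j - Y m`.  Then after the update: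
`I[p]` is unchanged for `p < i`, for `p ∈ [i, j-1]`, and for `p > j`; and `I[j]`
becomes 0 iff `Y j - Y m = 1`, i.e. iff the corresponding `Z'` entry equals 1. -/
theorem stmt5 (i j m : ℕ) (Y Y' : ℕ → ℤ) (hY0 : Y 0 = 0)
    (hi : 1 ≤ i) (hij : i < j) (hjm : Marked Y j)
    (hm : Marked Y m) (hmi : m < i)
    (hnomark : ∀ q, m < q → q < j → ¬ Marked Y q)
    (hY' : ∀ p, Y' p = if i ≤ p then Y p - 1 else Y p) :
    (∀ p, p < i → (Marked Y' p ↔ Marked Y p)) ∧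
    (∀ p, i ≤ p → p < j → (Marked Y' p ↔ Marked Y p)) ∧
    (∀ p, j < p → (Marked Y' p ↔ Marked Y p)) ∧
    (¬ Marked Y' j ↔ Y j - Y m = 1) := by
  have haux := stmt5_aux m j Y hm hnomark
  -- max over q < i is at most Y m
  have hmax : ∀ q, q < i → Y q ≤ Y m := by
    intro q hq
    rcases lt_trichotomy q m with h1 | h1 | h1
    · exact (hm q h1).le
    · exact h1 ▸ le_refl _
    · exact haux q h1 (hq.trans hij)
  refine ⟨?_, ?_, ?_, ?_⟩
  · intro p hp
    constructor
    · intro h q hq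
      have := h q hq
      rwa [hY' q, hY' p, if_neg (by omega), if_neg (by omega)] at this
    · intro h q hq
      rw [hY' q, hY' p, if_neg (by omega), if_neg (by omega)]
      exact h q hq
  · intro p hip hpj
    have hnm : ¬ Marked Y p := hnomark p (hmi.trans_le hip) hpj
    constructor
    · intro h
      exfalso
      apply hnm
      intro q hq
      have := h q hq
      rw [hY' q, hY' p, if_pos hip] at this
      split at this <;> omega
    · intro h; exact absurd h hnm
  · intro p hjp
    constructor
    · intro h q hq
      have := h q hq
      rw [hY' q, hY' p, if_pos (show i ≤ p by omega)] at this
      split at this <;> omega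
    · intro h q hq
      rw [hY' q, hY' p, if_pos (show i ≤ p by omega)]
      have h1 := h q hq
      split
      · omega
      · -- q < i, so Y q ≤ Y m < Y j < Y p
        have h2 : Y q ≤ Y m := hmax q (by omega)
        have h3 : Y m < Y j := hjm m (hmi.trans hij)
        have h4 : Y j < Y p := h j hjp
        omega
  · have hYmj : Y m < Y j := hjm m (hmi.trans hij)
    constructor
    · intro h
      by_contra hne
      apply h
      intro q hq
      rw [hY' q, hY' j, if_pos (show i ≤ j by omega)]
      split
      · have := hjm q hq; omega
      · have h2 : Y q ≤ Y m := hmax q (by omega)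
        omega
    · intro h hMj
      have := hMj m (hmi.trans hij)
      rw [hY' m, hY' j, if_neg (by omega), if_pos (show i ≤ j by omega)] at this
      omega
end

section
/- Correctness of block-decomposed fwd_search with a starting position: let A be partitioned into blocks A₁,...,A_k by sizes S, M[t] = max(A_t), and let i be a position lying in block t (so t = min { t' : sum(S,t') ≥ i }). Then min { j ≥ i : A[j] ≥ d } equals: the answer within block t offset by sum(S,t−1), if some position j' ≥ i − sum(S,t−1) in A_t has A_t[j'] ≥ d; otherwise sum(S,t*−1) + min { j' : A_{t*}[j'] ≥ d } where t* = min { t' > t : M[t'] ≥ d }, if such t* exists; otherwise no such j exists. -/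
/-- `ssum S t = S[1] + ... + S[t]`: position of the end of block `t`. -/
def ssum (S : ℕ → ℕ) (t : ℕ) : ℕ := ∑ r ∈ Finset.Icc 1 t, S r

/-- Maximum of `A` over positions in `[a,b]` (as a supremum in `ℤ`). -/
noncomputable def maxIcc (A : ℕ → ℤ) (a b : ℕ) : ℤ := sSup (A '' Set.Icc a b)



lemma ssum_mono (S : ℕ → ℕ) : Monotone (ssum S) := fun a b h =>
  Finset.sum_le_sum_of_subset (Finset.Icc_subset_Icc_right h)

lemma ssum_succ (S : ℕ → ℕ) (n : ℕ) : ssum S (n + 1) = ssum S n + S (n + 1) :=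
  Finset.sum_Icc_succ_top (Nat.le_add_left 1 n) S

lemma ssum_pred (S : ℕ → ℕ) (t : ℕ) (ht : 1 ≤ t) : ssum S t = ssum S (t - 1) + S t := by
  obtain ⟨n, rfl⟩ := Nat.exists_eq_add_of_le' ht
  simpa using ssum_succ S n

lemma le_maxIcc (A : ℕ → ℤ) (a b j : ℕ) (h : j ∈ Set.Icc a b) : A j ≤ maxIcc A a b :=
  le_csSup ((Set.finite_Icc a b).image A).bddAbove ⟨j, h, rfl⟩

lemma maxIcc_mem (A : ℕ → ℤ) (a b : ℕ) (h : a ≤ b) :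
    ∃ j, a ≤ j ∧ j ≤ b ∧ A j = maxIcc A a b := by
  have hne : (A '' Set.Icc a b).Nonempty := ⟨A a, a, ⟨le_refl a, h⟩, rfl⟩
  have := hne.csSup_mem ((Set.finite_Icc a b).image A)
  obtain ⟨j, hj, hj2⟩ := this
  exact ⟨j, hj.1, hj.2, hj2⟩

/-- locate a block containing j -/
lemma locate (S : ℕ → ℕ) (t : ℕ) : ∀ m j, ssum S t < j → j ≤ ssum S m →
    ∃ t', t < t' ∧ t' ≤ m ∧ ssum S (t' - 1) < j ∧ j ≤ ssum S t' := by
  intro m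
  induction m with
  | zero => intro j h1 h2
            exact absurd (lt_of_lt_of_le h1 h2) (not_lt.2 (ssum_mono S (Nat.zero_le t)))
  | succ n ih =>
    intro j h1 h2
    by_cases hc : j ≤ ssum S n
    · obtain ⟨t', a, b, c, e⟩ := ih j h1 hc
      exact ⟨t', a, Nat.le_succ_of_le b, c, e⟩
    · push_neg at hc
      have htn : t < n + 1 := by
        by_contra hx
        push_neg at hx
        have := Nat.le_trans h2 (ssum_mono S hx)
        omega
      exact ⟨n + 1, htn, le_refl _, by simpa using hc, h2⟩

/-- sInf of a shifted set -/
lemma sInf_shift (a : ℕ) (P : ℕ → Prop) (L R : Set ℕ)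
    (hR : R.Nonempty)
    (hmem : ∀ j' ∈ R, a + j' ∈ L)
    (hrev : sInf L - a ∈ R ∧ a ≤ sInf L) : sInf L = a + sInf R := by
  have h1 : sInf L ≤ a + sInf R := Nat.sInf_le (hmem _ (Nat.sInf_mem hR))
  have h2 : sInf R ≤ sInf L - a := Nat.sInf_le hrev.1
  omega


/-- Correctness of block-decomposed `fwd_search` with a starting position `i` lying in
block `t`: `min{j ≥ i : A[j] ≥ d}` equals the answer within block `t` offset by
`ssum S (t-1)` if block `t` contains a valid position `≥ i`; otherwise it equals
`ssum S (t*-1) + min{j' : A_{t*}[j'] ≥ d}` where `t* = min{t' > t : M[t'] ≥ d}`, if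
such `t*` exists; otherwise no such `j` exists. -/
theorem stmt8 (A : ℕ → ℤ) (S : ℕ → ℕ) (k : ℕ)
    (hS : ∀ t, 1 ≤ t → t ≤ k → 1 ≤ S t)
    (i t : ℕ) (ht1 : 1 ≤ t) (htk : t ≤ k)
    (hlo : ssum S (t - 1) < i) (hhi : i ≤ ssum S t) (d : ℤ) :
    ((∃ j, i ≤ j ∧ j ≤ ssum S t ∧ d ≤ A j) →
      sInf {j | i ≤ j ∧ j ≤ ssum S k ∧ d ≤ A j}
        = ssum S (t - 1) +
          sInf {j' | i - ssum S (t - 1) ≤ j' ∧ j' ≤ S t ∧ d ≤ A (ssum S (t - 1) + j')}) ∧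
    ((¬ ∃ j, i ≤ j ∧ j ≤ ssum S t ∧ d ≤ A j) →
      (∃ t', t < t' ∧ t' ≤ k ∧ d ≤ maxIcc A (ssum S (t' - 1) + 1) (ssum S t')) →
      let tstar := sInf {t' | t < t' ∧ t' ≤ k ∧ d ≤ maxIcc A (ssum S (t' - 1) + 1) (ssum S t')}
      sInf {j | i ≤ j ∧ j ≤ ssum S k ∧ d ≤ A j}
        = ssum S (tstar - 1) +
          sInf {j' | 1 ≤ j' ∧ j' ≤ S tstar ∧ d ≤ A (ssum S (tstar - 1) + j')}) ∧
    ((¬ ∃ j, i ≤ j ∧ j ≤ ssum S t ∧ d ≤ A j) →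
      (¬ ∃ t', t < t' ∧ t' ≤ k ∧ d ≤ maxIcc A (ssum S (t' - 1) + 1) (ssum S t')) →
      ¬ ∃ j, i ≤ j ∧ j ≤ ssum S k ∧ d ≤ A j) := by
  have hst : ssum S t = ssum S (t - 1) + S t := ssum_pred S t ht1
  have hmk : ssum S t ≤ ssum S k := ssum_mono S htk
  set a := ssum S (t - 1) with ha
  refine ⟨?_, ?_, ?_⟩
  · rintro ⟨j0, hj0i, hj0t, hj0d⟩
    set L : Set ℕ := {j | i ≤ j ∧ j ≤ ssum S k ∧ d ≤ A j} with hL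
    set R : Set ℕ := {j' | i - a ≤ j' ∧ j' ≤ S t ∧ d ≤ A (a + j')} with hR
    have haj0 : a < j0 := lt_of_lt_of_le hlo hj0i
    have hRne : R.Nonempty := by
      refine ⟨j0 - a, by omega, by omega, ?_⟩
      have : a + (j0 - a) = j0 := by omega
      rw [this]; exact hj0d
    have hmem : ∀ j' ∈ R, a + j' ∈ L := by
      rintro j' ⟨h1, h2, h3⟩
      exact ⟨by omega, by omega, h3⟩
    have hLne : L.Nonempty := ⟨j0, hj0i, le_trans hj0t hmk, hj0d⟩
    obtain ⟨hm1, hm2, hm3⟩ := Nat.sInf_mem hLne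
    have hmj0 : sInf L ≤ j0 := Nat.sInf_le ⟨hj0i, le_trans hj0t hmk, hj0d⟩
    have ham : a < sInf L := lt_of_lt_of_le hlo hm1
    have hmR : sInf L - a ∈ R := by
      refine ⟨by omega, by omega, ?_⟩
      have : a + (sInf L - a) = sInf L := by omega
      rw [this]; exact hm3
    have h1 : sInf L ≤ a + sInf R := Nat.sInf_le (hmem _ (Nat.sInf_mem hRne))
    have h2 : sInf R ≤ sInf L - a := Nat.sInf_le hmR
    omega
  · intro hno hex tstar
    have htT : tstar ∈ {t' | t < t' ∧ t' ≤ k ∧ d ≤ maxIcc A (ssum S (t' - 1) + 1) (ssum S t')} :=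
      Nat.sInf_mem hex
    obtain ⟨h1, h2, h3⟩ := htT
    set b := ssum S (tstar - 1) with hb
    have hSt : 1 ≤ S tstar := hS tstar (by omega) h2
    have hbs : ssum S tstar = b + S tstar := ssum_pred S tstar (by omega)
    have hable : b + 1 ≤ ssum S tstar := by omega
    obtain ⟨j0, hj0a, hj0b, hj0e⟩ := maxIcc_mem A (b + 1) (ssum S tstar) hable
    have hj0d : d ≤ A j0 := hj0e ▸ h3
    have htb : ssum S t ≤ b := ssum_mono S (by omega)
    have hsk : ssum S tstar ≤ ssum S k := ssum_mono S h2
    set L : Set ℕ := {j | i ≤ j ∧ j ≤ ssum S k ∧ d ≤ A j} with hL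
    set R : Set ℕ := {j' | 1 ≤ j' ∧ j' ≤ S tstar ∧ d ≤ A (b + j')} with hR
    have hj0L : j0 ∈ L := ⟨by omega, by omega, hj0d⟩
    have hLne : L.Nonempty := ⟨j0, hj0L⟩
    obtain ⟨hm1, hm2, hm3⟩ := Nat.sInf_mem hLne
    have hmj0 : sInf L ≤ j0 := Nat.sInf_le hj0L
    have hbm : b < sInf L := by
      by_contra hx
      push_neg at hx
      have hmt : ¬ sInf L ≤ ssum S t := fun h => hno ⟨sInf L, hm1, h, hm3⟩
      push_neg at hmt
      obtain ⟨t', ht'1, ht'2, ht'3, ht'4⟩ := locate S t (tstar - 1) (sInf L) hmt hx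
      have hT' : t' ∈ {t' | t < t' ∧ t' ≤ k ∧ d ≤ maxIcc A (ssum S (t' - 1) + 1) (ssum S t')} :=
        ⟨ht'1, by omega, le_trans hm3 (le_maxIcc A _ _ _ ⟨by omega, ht'4⟩)⟩
      have := Nat.sInf_le hT'
      omega
    have hRne : R.Nonempty := by
      refine ⟨j0 - b, by omega, by omega, ?_⟩
      have : b + (j0 - b) = j0 := by omega
      rw [this]; exact hj0d
    have hmem : ∀ j' ∈ R, b + j' ∈ L := by
      rintro j' ⟨hx1, hx2, hx3⟩
      exact ⟨by omega, by omega, hx3⟩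
    have hmR : sInf L - b ∈ R := by
      refine ⟨by omega, by omega, ?_⟩
      have : b + (sInf L - b) = sInf L := by omega
      rw [this]; exact hm3
    have hh1 : sInf L ≤ b + sInf R := Nat.sInf_le (hmem _ (Nat.sInf_mem hRne))
    have hh2 : sInf R ≤ sInf L - b := Nat.sInf_le hmR
    omega
  · rintro hno hnex ⟨j, hji, hjk, hjd⟩
    by_cases hc : j ≤ ssum S t
    · exact hno ⟨j, hji, hc, hjd⟩
    · push_neg at hc
      obtain ⟨t', ht'1, ht'2, ht'3, ht'4⟩ := locate S t k j hc hjk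
      exact hnex ⟨t', ht'1, ht'2, le_trans hjd (le_maxIcc A _ _ _ ⟨by omega, ht'4⟩)⟩
end

section
/- Let P be the balanced parentheses string of an ordinal tree T (opening = 1, closing = 0) and π(1)=1, π(0)=−1. For a node x represented by the index of its opening parenthesis, with close(x) the index of its matching closing parenthesis, the number of children of x equals the number of positions k in [x+1, close(x)−1] at which the prefix sum π(P)[k] attains its minimum over that range, i.e. degree(x) = min_count(π(P), x+1, close(x)−1). -/
/-- Ordinal (rooted, ordered) trees: a node with a list of children subtrees. -/
inductive OTree where
  | node : List OTree → OTree

/-- Balanced parentheses (DFS) encoding: `1` (`true`) = opening parenthesis,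
`0` (`false`) = closing parenthesis. -/
def bp : OTree → List Bool
  | .node ts => true :: (ts.attach.map (fun ⟨t, _⟩ => bp t)).flatten ++ [false]

/-- `π(1) = 1`, `π(0) = -1`. -/
def piB (b : Bool) : ℤ := if b then 1 else -1

/-- `π(P)[k]`: prefix sum of `π` over the first `k` characters of `P` (1-indexed). -/
def lpsum (P : List Bool) (k : ℕ) : ℤ := ((P.take k).map piB).sum

/-- Minimum of `A` over positions in `[a,b]`. -/
noncomputable def minIcc (A : ℕ → ℤ) (a b : ℕ) : ℤ := sInf (A '' Set.Icc a b)

/-- `min_count(A,i,j) = |{i ≤ k ≤ j : A[k] = min(A[i..j])}|`. -/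
noncomputable def minCount (A : ℕ → ℤ) (a b : ℕ) : ℕ :=
  {p | p ∈ Set.Icc a b ∧ A p = minIcc A a b}.ncard

/-! Between the parentheses of `x` the string is the concatenation `S` of the encodings of the
children of `x`, and each of these is a primitive Dyck word: its prefix sums are positive and
return to `0` only at its last letter. On `[x+1, close(x)-1]` the prefix sums of `P` are
therefore `π(P)[x] + π(S)[j]` with `π(S)[j] ≥ 0`, so their minimum is `π(P)[x]`, attained exactly
at the last letters of the children. -/

lemma bp_node (ts : List OTree) : bp (.node ts) = true :: (ts.map bp).flatten ++ [false] := by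
  rw [bp]; congr 1; simp

@[simp] lemma lpsum_zero (L : List Bool) : lpsum L 0 = 0 := by simp [lpsum]

lemma lpsum_cons_succ (b : Bool) (L : List Bool) (k : ℕ) :
    lpsum (b :: L) (k + 1) = piB b + lpsum L k := by
  simp [lpsum]

lemma lpsum_append (A B : List Bool) (k : ℕ) :
    lpsum (A ++ B) k = lpsum A k + lpsum B (k - A.length) := by
  simp [lpsum, List.take_append]

lemma lpsum_of_length_le {L : List Bool} {k : ℕ} (h : L.length ≤ k) :
    lpsum L k = lpsum L L.length := by
  simp [lpsum, List.take_of_length_le h]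

lemma lpsum_append_of_le (A B : List Bool) {k : ℕ} (h : k ≤ A.length) :
    lpsum (A ++ B) k = lpsum A k := by
  rw [lpsum_append, Nat.sub_eq_zero_of_le h, lpsum_zero, add_zero]

lemma lpsum_append_length_add (A B : List Bool) (k : ℕ) :
    lpsum (A ++ B) (A.length + k) = lpsum A A.length + lpsum B k := by
  rw [lpsum_append, lpsum_of_length_le (Nat.le_add_right _ _), Nat.add_sub_cancel_left]

structure IsPrimitiveDyck (L : List Bool) : Prop where
  length_pos : 0 < L.length
  lpsum_length : lpsum L L.length = 0
  one_le_lpsum : ∀ k, 0 < k → k < L.length → 1 ≤ lpsum L k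

namespace IsPrimitiveDyck

variable {L : List Bool}

lemma lpsum_nonneg (h : IsPrimitiveDyck L) (k : ℕ) : 0 ≤ lpsum L k := by
  rcases Nat.eq_zero_or_pos k with rfl | hk
  · simp
  rcases Nat.lt_or_ge k L.length with hkL | hkL
  · linarith [h.one_le_lpsum k hk hkL]
  · rw [lpsum_of_length_le hkL, h.lpsum_length]

lemma lpsum_eq_zero_iff (h : IsPrimitiveDyck L) {k : ℕ} (hk : 0 < k) (hkL : k ≤ L.length) :
    lpsum L k = 0 ↔ k = L.length := by
  refine ⟨fun h0 => ?_, fun hk => hk ▸ h.lpsum_length⟩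
  by_contra hne
  linarith [h.one_le_lpsum k hk (lt_of_le_of_ne hkL hne)]

end IsPrimitiveDyck

section Flatten

variable {ls : List (List Bool)}

lemma lpsum_flatten_nonneg (h : ∀ L ∈ ls, IsPrimitiveDyck L) (k : ℕ) :
    0 ≤ lpsum ls.flatten k := by
  induction ls generalizing k with
  | nil => simp [lpsum]
  | cons L ls ih =>
    rw [List.flatten_cons, lpsum_append]
    have hL := (h L List.mem_cons_self).lpsum_nonneg k
    have hls := ih (fun L' hL' => h L' (List.mem_cons_of_mem _ hL')) (k - L.length)
    linarith

lemma lpsum_flatten_length (h : ∀ L ∈ ls, IsPrimitiveDyck L) :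
    lpsum ls.flatten ls.flatten.length = 0 := by
  induction ls with
  | nil => simp
  | cons L ls ih =>
    rw [List.flatten_cons, List.length_append, lpsum_append_length_add,
      (h L List.mem_cons_self).lpsum_length, ih (fun L' hL' => h L' (List.mem_cons_of_mem _ hL')),
      add_zero]

lemma card_filter_lpsum_flatten_eq_zero (h : ∀ L ∈ ls, IsPrimitiveDyck L) :
    ((Finset.Icc 1 ls.flatten.length).filter (lpsum ls.flatten · = 0)).card = ls.length := by
  induction ls with
  | nil => simp
  | cons L ls ih =>
    have hL := h L List.mem_cons_self
    have hls : ∀ L' ∈ ls, IsPrimitiveDyck L' := fun L' hL' => h L' (List.mem_cons_of_mem _ hL')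
    set S := ls.flatten
    have hzeros : (Finset.Icc 1 (L ++ S).length).filter (lpsum (L ++ S) · = 0) =
        insert L.length (((Finset.Icc 1 S.length).filter (lpsum S · = 0)).map
          (addLeftEmbedding L.length)) := by
      ext k
      simp only [Finset.mem_filter, Finset.mem_Icc, Finset.mem_insert, Finset.mem_map,
        addLeftEmbedding_apply, List.length_append]
      rcases le_or_gt k L.length with hkL | hkL
      · rw [lpsum_append_of_le _ _ hkL]
        constructor
        · rintro ⟨⟨hk, -⟩, h0⟩
          exact Or.inl ((hL.lpsum_eq_zero_iff hk hkL).mp h0)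
        · rintro (rfl | ⟨j, ⟨⟨hj, -⟩, -⟩, rfl⟩)
          · exact ⟨⟨hL.length_pos, by omega⟩, hL.lpsum_length⟩
          · omega
      · obtain ⟨j, rfl⟩ : ∃ j, k = L.length + j := ⟨k - L.length, by omega⟩
        rw [lpsum_append_length_add, hL.lpsum_length, zero_add]
        constructor
        · rintro ⟨⟨-, hkS⟩, h0⟩
          exact Or.inr ⟨j, ⟨⟨by omega, by omega⟩, h0⟩, rfl⟩
        · rintro (h' | ⟨i, ⟨⟨hi, hiS⟩, h0⟩, hij⟩)
          · omega
          · obtain rfl : i = j := by omega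
            exact ⟨⟨by omega, by omega⟩, h0⟩
    rw [List.flatten_cons, hzeros, Finset.card_insert_of_notMem (by simp), Finset.card_map,
      ih hls, List.length_cons]

end Flatten

theorem isPrimitiveDyck_bp : ∀ t : OTree, IsPrimitiveDyck (bp t)
  | .node ts => by
    have hchildren : ∀ L ∈ ts.map bp, IsPrimitiveDyck L :=
      List.forall_mem_map.2 fun t _ => isPrimitiveDyck_bp t
    set S := (ts.map bp).flatten
    have hbp : bp (.node ts) = [true] ++ (S ++ [false]) := by rw [bp_node]; rfl
    have hlen : (bp (.node ts)).length = [true].length + (S.length + 1) := by rw [hbp]; simp; omega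
    have hopen : lpsum [true] [true].length = 1 := by simp [lpsum, piB]
    refine ⟨by simp [hlen], ?_, fun k hk hkL => ?_⟩
    · rw [hlen, hbp, lpsum_append_length_add, lpsum_append_length_add,
        lpsum_flatten_length hchildren, hopen]
      simp [lpsum, piB]
    · obtain ⟨j, rfl⟩ := Nat.exists_eq_add_of_lt hk
      rw [hlen] at hkL
      rw [hbp, show 0 + j + 1 = [true].length + j by simp [add_comm], lpsum_append_length_add,
        lpsum_append_of_le _ _ (by simp only [List.length_singleton] at hkL; omega), hopen]
      linarith [lpsum_flatten_nonneg hchildren j]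
termination_by t => sizeOf t
decreasing_by
  have := List.sizeOf_lt_of_mem ‹t ∈ ts›
  simp only [OTree.node.sizeOf_spec]
  omega

lemma minCount_eq_card_filter {A : ℕ → ℤ} {a b : ℕ} {μ : ℤ}
    (hle : ∀ k ∈ Set.Icc a b, μ ≤ A k) (hb : A b = μ) :
    minCount A a b = ((Finset.Icc a b).filter (A · = μ)).card := by
  -- any `p` in the window makes it nonempty, so that `b` witnesses the minimum
  have hmin : ∀ p ∈ Set.Icc a b, minIcc A a b = μ := fun p hp =>
    IsLeast.csInf_eq ⟨⟨b, ⟨hp.1.trans hp.2, le_rfl⟩, hb⟩, by rintro _ ⟨k, hk, rfl⟩; exact hle k hk⟩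
  rw [minCount, ← Set.ncard_coe_finset]
  congr 1
  ext p
  simp only [Set.mem_ofPred_eq, Finset.coe_filter, Finset.mem_Icc, ← Set.mem_Icc]
  exact and_congr_right fun hp => by rw [hmin p hp]

lemma lpsum_append_bp_node_append (u w : List Bool) (ts : List OTree) {j : ℕ}
    (hj : j ≤ (ts.map bp).flatten.length) :
    lpsum (u ++ bp (.node ts) ++ w) (u.length + 1 + j) =
      lpsum u u.length + 1 + lpsum (ts.map bp).flatten j := by
  rw [bp_node, show u ++ (true :: (ts.map bp).flatten ++ [false]) ++ w =
      u ++ (true :: ((ts.map bp).flatten ++ ([false] ++ w))) by simp,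
    add_assoc, lpsum_append_length_add, add_comm 1 j, lpsum_cons_succ,
    lpsum_append_of_le _ _ hj]
  simp only [piB, if_true]
  ring

theorem stmt9_general (u w : List Bool) (ts : List OTree) :
    let P := u ++ bp (OTree.node ts) ++ w
    let x := u.length + 1
    let c := u.length + (bp (OTree.node ts)).length
    minCount (lpsum P) (x + 1) (c - 1) = ts.length := by
  intro P x c
  set S := (ts.map bp).flatten
  have hchildren : ∀ L ∈ ts.map bp, IsPrimitiveDyck L :=
    List.forall_mem_map.2 fun t _ => isPrimitiveDyck_bp t
  have hwindow : ∀ j ≤ S.length, lpsum P (x + j) = lpsum u u.length + 1 + lpsum S j :=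
    fun _ hj => lpsum_append_bp_node_append u w ts hj
  have hc : c - 1 = x + S.length := by simp [c, x, S, bp_node]; omega
  rw [hc, minCount_eq_card_filter (μ := lpsum u u.length + 1)]
  · rw [← Finset.map_add_left_Icc, Finset.filter_map, Finset.card_map,
      ← List.length_map (f := bp), ← card_filter_lpsum_flatten_eq_zero hchildren]
    refine congrArg _ (Finset.filter_congr fun j hj => ?_)
    rw [Function.comp_apply, addLeftEmbedding_apply, hwindow j (Finset.mem_Icc.1 hj).2]
    exact add_eq_left
  · rintro k ⟨hk, hkc⟩
    obtain ⟨j, rfl⟩ : ∃ j, k = x + j := ⟨k - x, by omega⟩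
    rw [hwindow j (by omega)]
    linarith [lpsum_flatten_nonneg hchildren j]
  · rw [hwindow _ le_rfl, lpsum_flatten_length hchildren, add_zero]

/-- `degree(x) = min_count(π(P), x+1, close(x)-1)`: for a non-leaf node `x` of an
ordinal tree whose subtree has children list `ts` and whose opening parenthesis is at
position `x = |u| + 1` of the balanced parentheses string `P = u ++ bp(node ts) ++ w`
(so its matching closing parenthesis is at `close(x) = |u| + |bp(node ts)|`), the
number of children of `x` equals the number of positions in `[x+1, close(x)-1]`
attaining the minimum prefix sum `π(P)[k]` over that range. -/
theorem stmt9 (u w : List Bool) (ts : List OTree) (hts : ts ≠ []) :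
    let P := u ++ bp (OTree.node ts) ++ w
    let x := u.length + 1
    let c := u.length + (bp (OTree.node ts)).length
    minCount (lpsum P) (x + 1) (c - 1) = ts.length :=
  stmt9_general u w ts
end
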